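/- Let r₁,…,r_m be holomorphic on a half-plane ℂ_ν̄ = {Re z > -ν̄}, continuous, with no common zero in ℂ_ν̄, and suppose r_m = δ + N̂ where δ is holomorphic with inf_{ℂ_ν̄}|δ| ≥ η > 0 on ℂ_ν̄ and N̂(z_k) → 0 along every sequence z_k ∈ ℂ_ν with |z_k| → ∞ (for each 0 < ν < ν̄). Then for every 0 < ν < ν̄: inf_{z ∈ ℂ_ν} Σ_{j=1}^m |r_j(z)| > 0. -/

import Mathlib

open Filter Metric

/-!
On the part of `{Re z > -ν}` inside a large ball, a compact subset of `{Re z > -ν̄}`, the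
continuous function `Σ_j |r_j|` has no zero and hence a positive minimum. Outside the ball
the decay of `N̂` gives `|N̂| ≤ η/2`, so already `|r_m| ≥ |δ| - |N̂| ≥ η/2`.
-/

theorem exists_norm_lt_of_forall_seq_tendsto_zero {E F : Type*} [NormedAddCommGroup E]
    [NormedAddCommGroup F] {S : Set E} {f : E → F}
    (h : ∀ w : ℕ → E, (∀ k, w k ∈ S) → Tendsto (fun k => ‖w k‖) atTop atTop →
      Tendsto (fun k => f (w k)) atTop (nhds 0))
    {ε : ℝ} (hε : 0 < ε) : ∃ R : ℝ, ∀ s ∈ S, R < ‖s‖ → ‖f s‖ < ε := by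
  by_contra! hR
  choose w hwS hw_large hw_bound using fun n : ℕ => hR n
  have hw : Tendsto (fun k => ‖w k‖) atTop atTop :=
    tendsto_atTop_mono (fun n => (hw_large n).le) tendsto_natCast_atTop_atTop
  obtain ⟨n, hn⟩ := ((h w hwS hw).norm.eventually (eventually_lt_nhds (by simpa using hε))).exists
  exact (hw_bound n).not_gt (by simpa using hn)

theorem half_le_norm_add {E : Type*} [SeminormedAddGroup E] {a b : E} {η : ℝ}
    (ha : η ≤ ‖a‖) (hb : ‖b‖ < η / 2) : η / 2 ≤ ‖a + b‖ := by
  linarith [norm_sub_le_norm_add a b]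

theorem isCompact_re_ge_inter_closedBall (ν R : ℝ) :
    IsCompact ({s : ℂ | -ν ≤ s.re} ∩ closedBall 0 R) :=
  (isCompact_closedBall 0 R).inter_left (isClosed_le continuous_const Complex.continuous_re)

theorem minors_bounded_below_general (m : ℕ) (νb η : ℝ) (hη : 0 < η)
    (r : Fin (m+1) → ℂ → ℂ)
    (hr : ∀ j, DifferentiableOn ℂ (r j) {s : ℂ | -νb < s.re})
    (hnz : ∀ s : ℂ, -νb < s.re → ∃ j, r j s ≠ 0)
    (δ Nh : ℂ → ℂ)
    (hδ : ∀ s : ℂ, -νb < s.re → η ≤ ‖δ s‖)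
    (hsplit : ∀ s : ℂ, -νb < s.re → r (Fin.last m) s = δ s + Nh s)
    (hdecay : ∀ ν : ℝ, 0 < ν → ν < νb → ∀ w : ℕ → ℂ, (∀ k, -ν < (w k).re) →
      Tendsto (fun k => ‖w k‖) atTop atTop →
      Tendsto (fun k => Nh (w k)) atTop (nhds 0)) :
    ∀ ν : ℝ, 0 < ν → ν < νb → ∃ c, 0 < c ∧ ∀ s : ℂ, -ν < s.re → c ≤ ∑ j, ‖r j s‖ := by
  intro ν hν hννb
  have hsub : ∀ s : ℂ, -ν ≤ s.re → -νb < s.re := fun s hs => by linarith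
  obtain ⟨R, hR⟩ := exists_norm_lt_of_forall_seq_tendsto_zero (S := {s : ℂ | -ν < s.re})
    (hdecay ν hν hννb) (half_pos hη)
  obtain ⟨c, hc, hc_le⟩ := (isCompact_re_ge_inter_closedBall ν R).exists_forall_le'
    (continuousOn_finsetSum _ fun j _ => ((hr j).continuousOn.mono fun s hs => hsub s hs.1).norm)
    (a := 0) fun s hs => by
      obtain ⟨j, hj⟩ := hnz s (hsub s hs.1)
      exact Finset.sum_pos' (fun _ _ => norm_nonneg _) ⟨j, Finset.mem_univ j, norm_pos_iff.2 hj⟩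
  refine ⟨min c (η / 2), lt_min hc (half_pos hη), fun s hs => ?_⟩
  by_cases hsR : ‖s‖ ≤ R
  · exact (min_le_left _ _).trans (hc_le s ⟨hs.le, mem_closedBall_zero_iff.2 hsR⟩)
  · calc min c (η / 2) ≤ η / 2 := min_le_right _ _
      _ ≤ ‖r (Fin.last m) s‖ := by
        rw [hsplit s (hsub s hs.le)]
        exact half_le_norm_add (hδ s (hsub s hs.le)) (hR s hs (not_le.1 hsR))
      _ ≤ ∑ j, ‖r j s‖ :=
        Finset.single_le_sum (f := fun j => ‖r j s‖) (fun _ _ => norm_nonneg _) (Finset.mem_univ _)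

/-- If `r₁,…,r_{m+1}` are holomorphic on the half-plane `{Re z > -ν̄}` with no common zero,
and the last one decomposes as `r_{m+1} = δ + N̂` with `|δ| ≥ η > 0` on the half-plane and
`N̂` vanishing at infinity in every smaller half-plane, then for each `0 < ν < ν̄` the sum
`Σ_j |r_j|` is bounded away from zero on `{Re z > -ν}`. -/
theorem minors_bounded_below (m : ℕ) (νb η : ℝ) (hνb : 0 < νb) (hη : 0 < η)
    (r : Fin (m+1) → ℂ → ℂ)
    (hr : ∀ j, DifferentiableOn ℂ (r j) {s : ℂ | -νb < s.re})
    (hnz : ∀ s : ℂ, -νb < s.re → ∃ j, r j s ≠ 0)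
    (δ Nh : ℂ → ℂ)
    (hδdiff : DifferentiableOn ℂ δ {s : ℂ | -νb < s.re})
    (hδ : ∀ s : ℂ, -νb < s.re → η ≤ ‖δ s‖)
    (hsplit : ∀ s : ℂ, -νb < s.re → r (Fin.last m) s = δ s + Nh s)
    (hdecay : ∀ ν : ℝ, 0 < ν → ν < νb → ∀ w : ℕ → ℂ, (∀ k, -ν < (w k).re) →
      Tendsto (fun k => ‖w k‖) atTop atTop →
      Tendsto (fun k => Nh (w k)) atTop (nhds 0)) :
    ∀ ν : ℝ, 0 < ν → ν < νb → ∃ c, 0 < c ∧ ∀ s : ℂ, -ν < s.re → c ≤ ∑ j, ‖r j s‖ :=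
  minors_bounded_below_general m νb η hη r hr hnz δ Nh hδ hsplit hdecay
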